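/- arXiv:1002.1492 — 5 statements merged into one kernel-verified Lean document; each statement's English description precedes it below -/
import Mathlib

section
/- Let G be a triangle-free graph with n vertices and at least ⌊n²/4⌋ − k edges. Then the vertex set of G has a partition X ∪ Y such that the number of edges of G inside X plus the number of edges inside Y is at most k. -/
attribute [local instance] Classical.propDecidable

/-- The number of edges of `G` with both endpoints in `X`. -/
noncomputable def edgesInside {n : ℕ} (G : SimpleGraph (Fin n)) (X : Finset (Fin n)) : ℕ :=
  (G.edgeFinset.filter (fun e => ∀ v ∈ e, v ∈ X)).card

/-- Triangle stability lemma: a triangle-free graph with `n` vertices and at least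
`⌊n²/4⌋ - k` edges admits a vertex partition `X ∪ Y` such that the number of edges
inside `X` plus the number of edges inside `Y` is at most `k`. -/
theorem triangle_stability {n k : ℕ} (G : SimpleGraph (Fin n))
    (hG : G.CliqueFree 3) (he : n ^ 2 / 4 - k ≤ G.edgeFinset.card) :
    ∃ X : Finset (Fin n), edgesInside G X + edgesInside G Xᶜ ≤ k := by
  classical
  rcases Nat.eq_zero_or_pos n with hn | hn
  · subst hn
    refine ⟨∅, ?_⟩
    have hE : G.edgeFinset = ∅ := Finset.eq_empty_of_isEmpty _
    simp [edgesInside, hE]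
  · have : Nonempty (Fin n) := ⟨⟨0, hn⟩⟩
    obtain ⟨v, hv⟩ := G.exists_maximal_degree_vertex
    set d := G.degree v with hd
    set X := G.neighborFinset v with hX
    refine ⟨X, ?_⟩
    -- X is independent
    have hXind : ∀ e ∈ G.edgeFinset, ¬ (∀ w ∈ e, w ∈ X) := by
      intro e he'
      induction e using Sym2.ind with
      | _ a b =>
        intro hab
        have ha : G.Adj v a := by
          simpa [hX] using hab a (Sym2.mem_mk_left a b)
        have hb : G.Adj v b := by
          simpa [hX] using hab b (Sym2.mem_mk_right a b)
        have hadj : G.Adj a b := by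
          rw [SimpleGraph.mem_edgeFinset, SimpleGraph.mem_edgeSet] at he'
          exact he'
        exact hG {v, a, b} (SimpleGraph.is3Clique_triple_iff.2 ⟨ha, hb, hadj⟩)
    have hX0 : edgesInside G X = 0 := by
      rw [edgesInside, Finset.card_eq_zero, Finset.filter_eq_empty_iff]
      exact hXind
    rw [hX0, zero_add]
    set Y := Xᶜ with hY
    -- degree bounds
    have hdeg : ∀ y : Fin n, G.degree y ≤ d := by
      intro y
      calc G.degree y ≤ G.maxDegree := G.degree_le_maxDegree y
        _ = d := hv
    have hdn : d < n := by
      have := G.maxDegree_lt_card_verts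
      simpa [hv, Fintype.card_fin] using this.trans_le (le_of_eq rfl)
    have hYcard : Y.card = n - d := by
      rw [hY, Finset.card_compl, hX, SimpleGraph.card_neighborFinset_eq_degree,
        Fintype.card_fin]
    -- double counting
    have hsum : ∑ y ∈ Y, G.degree y = ∑ e ∈ G.edgeFinset, (Y.filter (· ∈ e)).card := by
      have h1 : ∀ y : Fin n, G.degree y = (G.edgeFinset.filter (y ∈ ·)).card := by
        intro y
        rw [← SimpleGraph.card_incidenceFinset_eq_degree, G.incidenceFinset_eq_filter]
      calc ∑ y ∈ Y, G.degree y
          = ∑ y ∈ Y, ∑ e ∈ G.edgeFinset, (if y ∈ e then 1 else 0) := by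
            refine Finset.sum_congr rfl fun y _ => ?_
            rw [h1 y, Finset.card_filter]
        _ = ∑ e ∈ G.edgeFinset, ∑ y ∈ Y, (if y ∈ e then 1 else 0) := Finset.sum_comm
        _ = ∑ e ∈ G.edgeFinset, (Y.filter (· ∈ e)).card := by
            refine Finset.sum_congr rfl fun e _ => ?_
            rw [Finset.card_filter]
    -- per edge bound
    have hedge : ∀ e ∈ G.edgeFinset,
        1 + (if ∀ w ∈ e, w ∈ Y then 1 else 0) ≤ (Y.filter (· ∈ e)).card := by
      intro e he'
      have hne := hXind e he'
      induction e using Sym2.ind with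
      | _ a b =>
        have hab : a ≠ b := by
          rw [SimpleGraph.mem_edgeFinset, SimpleGraph.mem_edgeSet] at he'
          exact he'.ne
        have hor : a ∈ Y ∨ b ∈ Y := by
          by_contra h
          push_neg at h
          exact hne fun w hw => by
            rcases Sym2.mem_iff.1 hw with rfl | rfl <;>
              [skip; skip] <;>
            · simp only [hY, Finset.mem_compl] at h
              by_contra hx
              first
                | exact absurd (Finset.mem_compl.2 hx) (by simpa [hY] using h.1)
                | exact absurd (Finset.mem_compl.2 hx) (by simpa [hY] using h.2)
        by_cases hall : ∀ w ∈ (s(a, b) : Sym2 (Fin n)), w ∈ Y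
        · have ha : a ∈ Y := hall a (Sym2.mem_mk_left a b)
          have hb : b ∈ Y := hall b (Sym2.mem_mk_right a b)
          have hsub : ({a, b} : Finset (Fin n)) ⊆ Y.filter (· ∈ (s(a, b) : Sym2 (Fin n))) := by
            intro w hw
            simp only [Finset.mem_insert, Finset.mem_singleton] at hw
            rcases hw with h | h
            · rw [h]; exact Finset.mem_filter.2 ⟨ha, Sym2.mem_mk_left a b⟩
            · rw [h]; exact Finset.mem_filter.2 ⟨hb, Sym2.mem_mk_right a b⟩
          have h2 : 2 ≤ (Y.filter (· ∈ (s(a, b) : Sym2 (Fin n)))).card := by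
            calc 2 = ({a, b} : Finset (Fin n)).card := (Finset.card_pair hab).symm
              _ ≤ _ := Finset.card_le_card hsub
          rw [if_pos hall]
          omega
        · have h1 : 1 ≤ (Y.filter (· ∈ (s(a, b) : Sym2 (Fin n)))).card := by
            rcases hor with hy | hy
            · exact Finset.card_pos.2 ⟨a, Finset.mem_filter.2 ⟨hy, Sym2.mem_mk_left a b⟩⟩
            · exact Finset.card_pos.2 ⟨b, Finset.mem_filter.2 ⟨hy, Sym2.mem_mk_right a b⟩⟩
          rw [if_neg hall]
          omega
    -- assemble
    have hmain : G.edgeFinset.card + edgesInside G Y ≤ ∑ y ∈ Y, G.degree y := by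
      have : ∑ e ∈ G.edgeFinset, (1 + (if ∀ w ∈ e, w ∈ Y then 1 else 0))
          ≤ ∑ e ∈ G.edgeFinset, (Y.filter (· ∈ e)).card :=
        Finset.sum_le_sum hedge
      rw [Finset.sum_add_distrib, Finset.sum_const, smul_eq_mul, mul_one] at this
      rw [hsum]
      calc G.edgeFinset.card + edgesInside G Y
          = G.edgeFinset.card + ∑ e ∈ G.edgeFinset, (if ∀ w ∈ e, w ∈ Y then 1 else 0) := by
            rw [edgesInside, Finset.card_filter]
        _ ≤ _ := this
    have hdegsum : ∑ y ∈ Y, G.degree y ≤ (n - d) * d := by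
      calc ∑ y ∈ Y, G.degree y ≤ ∑ _y ∈ Y, d := Finset.sum_le_sum fun y _ => hdeg y
        _ = (n - d) * d := by rw [Finset.sum_const, smul_eq_mul, hYcard]
    have hquad : (n - d) * d ≤ n ^ 2 / 4 := by
      rw [Nat.le_div_iff_mul_le (by norm_num)]
      have hdn' : d ≤ n := hdn.le
      zify [hdn']
      nlinarith [sq_nonneg ((n : ℤ) - 2 * d)]
    have hek : n ^ 2 / 4 ≤ G.edgeFinset.card + k := by omega
    omega
end

section
/- Let G be a triangle-free graph, let v be a vertex of maximum degree, let Y = N(v) and X = V(G) \ N(v). Then Y is an independent set and e(G) + e(G[X]) ≤ ⌊n²/4⌋, where n is the number of vertices of G. -/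
attribute [local instance] Classical.propDecidable

/-- Key step in Füredi's proof of triangle stability: if `G` is triangle-free, `v` has
maximum degree, `Y = N(v)` and `X = V \ N(v)`, then `Y` is independent and
`e(G) + e(G[X]) ≤ ⌊n²/4⌋`. -/
theorem furedi_step {n : ℕ} (G : SimpleGraph (Fin n)) (hG : G.CliqueFree 3)
    (v : Fin n) (hv : ∀ w : Fin n, G.degree w ≤ G.degree v) :
    (∀ a ∈ G.neighborFinset v, ∀ b ∈ G.neighborFinset v, ¬ G.Adj a b) ∧
      G.edgeFinset.card + edgesInside G (G.neighborFinset v)ᶜ ≤ n ^ 2 / 4 := by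
  classical
  set Y := G.neighborFinset v with hY
  set X := Yᶜ with hX
  have hind : ∀ a ∈ Y, ∀ b ∈ Y, ¬ G.Adj a b := by
    intro a ha b hb hab
    rw [hY, SimpleGraph.mem_neighborFinset] at ha hb
    exact hG {v, a, b} (SimpleGraph.is3Clique_triple_iff.2 ⟨ha, hb, hab⟩)
  refine ⟨hind, ?_⟩
  set E := G.edgeFinset with hE
  -- per-edge bound
  have hedge : ∀ e ∈ E, 1 + (if ∀ u ∈ e, u ∈ X then 1 else 0) ≤
      (X.filter (fun x => x ∈ e)).card := by
    intro e he
    rw [hE, SimpleGraph.mem_edgeFinset] at he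
    induction e with
    | h a b =>
      have hab : G.Adj a b := he
      have hne : a ≠ b := hab.ne
      have hx : a ∈ X ∨ b ∈ X := by
        by_contra h
        push_neg at h
        rw [hX, Finset.notMem_compl, Finset.notMem_compl] at h
        exact hind a h.1 b h.2 hab
      by_cases hP : ∀ u ∈ s(a, b), u ∈ X
      · have ha : a ∈ X := hP a (by simp)
        have hb : b ∈ X := hP b (by simp)
        rw [if_pos hP]
        have : ({a, b} : Finset (Fin n)) ⊆ X.filter (fun x => x ∈ s(a, b)) := by
          intro x hx
          simp only [Finset.mem_insert, Finset.mem_singleton] at hx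
          rcases hx with rfl | rfl <;> simp [ha, hb]
        calc 1 + 1 = ({a, b} : Finset (Fin n)).card := by
              rw [Finset.card_insert_of_notMem (by simpa using hne), Finset.card_singleton]
          _ ≤ _ := Finset.card_le_card this
      · rw [if_neg hP]
        have : (X.filter (fun x => x ∈ s(a, b))).Nonempty := by
          rcases hx with h | h
          · exact ⟨a, by simp [h]⟩
          · exact ⟨b, by simp [h]⟩
        simpa using Finset.card_pos.2 this
  have key1 : E.card + edgesInside G X ≤ ∑ e ∈ E, (X.filter (fun x => x ∈ e)).card := by
    have : E.card + edgesInside G X =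
        ∑ e ∈ E, (1 + (if ∀ u ∈ e, u ∈ X then 1 else 0)) := by
      rw [Finset.sum_add_distrib, Finset.sum_const, smul_eq_mul, mul_one,
        edgesInside, Finset.card_filter, hE]
    rw [this]
    exact Finset.sum_le_sum hedge
  have key2 : ∑ e ∈ E, (X.filter (fun x => x ∈ e)).card = ∑ x ∈ X, G.degree x := by
    simp_rw [Finset.card_filter]
    rw [Finset.sum_comm]
    refine Finset.sum_congr rfl fun x _ => ?_
    rw [← Finset.card_filter, ← SimpleGraph.card_incidenceFinset_eq_degree,
      SimpleGraph.incidenceFinset_eq_filter]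
  have key3 : ∑ x ∈ X, G.degree x ≤ X.card * Y.card := by
    have : ∀ x ∈ X, G.degree x ≤ Y.card := fun x _ => by
      rw [hY, SimpleGraph.card_neighborFinset_eq_degree]; exact hv x
    calc ∑ x ∈ X, G.degree x ≤ ∑ _x ∈ X, Y.card := Finset.sum_le_sum this
      _ = X.card * Y.card := by rw [Finset.sum_const, smul_eq_mul]
  have hcards : X.card + Y.card = n := by
    rw [hX, Finset.card_compl, Fintype.card_fin]
    exact Nat.sub_add_cancel (Y.card_le_univ.trans_eq (by simp))
  have final : X.card * Y.card ≤ n ^ 2 / 4 := by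
    rw [Nat.le_div_iff_mul_le (by norm_num)]
    have := two_mul_le_add_sq X.card Y.card
    nlinarith [hcards]
  omega
end

section
/- For n even, let G be obtained from the complete bipartite graph K_{n/2, n/2} by deleting one vertex v from one part, adding v back, and joining v to ⌊αn/2⌋ − 1 vertices of one part and n/2 − ⌊αn/2⌋ + 2 vertices of the other part, where α ∈ (1/2, 1). Then G has n vertices, at least ⌊n²/4⌋ + 1 edges, every edge of G lies in fewer than αn/2 triangles, and the number of triangles in G is at most α(1−α)n²/4 + O(n). -/
/-!
Write `v` for the vertex `0`, `A = {1, …, m-1}` and `B = {m, …, 2m-1}`: the graph is `K_{A,B}`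
together with `v` joined to `X = {1, …, k-1} ⊆ A` and `Y = {m, …, 2m-k+1} ⊆ B`. As `K_{A,B}` is
bipartite, every triangle is `vxy` with `x ∈ X`, `y ∈ Y`, so there are at most
`(k-1)(m-k+2) ≈ α(1-α)m²` of them. For the same reason the common neighbours of an edge `vx` with
`x ∈ X` lie in `Y` (and symmetrically), while an edge of `K_{A,B}` has no common neighbour but `v`;
hence every codegree is at most `max(k-1, m-k+2) < αm`. Finally there are
`(m-1)m + (k-1) + (m-k+2) = m² + 1` edges.
-/

attribute [local instance] Classical.propDecidable

/-- `K_{m,m}` on `Fin (2m)` (parts `{i < m}`, `{i ≥ m}`) with the vertex `0` detached from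
the second part and instead joined to the `k - 1` vertices `1, …, k-1` of the first part
and the `m - k + 2` vertices `m, …, 2m-k+1` of the second part. -/
noncomputable def thm1Example (m k : ℕ) : SimpleGraph (Fin (2 * m)) :=
  SimpleGraph.fromRel (fun i j =>
    ((i : ℕ) ≠ 0 ∧ (i : ℕ) < m ∧ ¬ ((j : ℕ) < m)) ∨
    ((i : ℕ) = 0 ∧ ((1 ≤ (j : ℕ) ∧ (j : ℕ) < k) ∨
      (m ≤ (j : ℕ) ∧ (j : ℕ) < 2 * m - k + 2))))

open Finset

namespace SimpleGraph

variable {V : Type*} {A B X Y : Finset V} {v : V}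

def bipartiteWithApex (A B X Y : Finset V) (v : V) : SimpleGraph V :=
  fromRel fun x y => (x ∈ A ∧ y ∈ B) ∨ (x = v ∧ (y ∈ X ∨ y ∈ Y))

theorem bipartiteWithApex_adj {x y : V} :
    (bipartiteWithApex A B X Y v).Adj x y ↔ x ≠ y ∧
      ((x ∈ A ∧ y ∈ B) ∨ (y ∈ A ∧ x ∈ B) ∨ (x = v ∧ (y ∈ X ∨ y ∈ Y)) ∨
        (y = v ∧ (x ∈ X ∨ x ∈ Y))) := by
  simp only [bipartiteWithApex, fromRel_adj]
  tauto

theorem bipartiteWithApex_apex_adj (hvA : v ∉ A) (hvB : v ∉ B) (hXA : X ⊆ A) (hYB : Y ⊆ B)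
    {y : V} : (bipartiteWithApex A B X Y v).Adj v y ↔ y ∈ X ∨ y ∈ Y := by
  have hvX : v ∉ X := fun h => hvA (hXA h)
  have hvY : v ∉ Y := fun h => hvB (hYB h)
  rw [bipartiteWithApex_adj]
  constructor
  · rintro ⟨hne, h | h | h | h⟩
    exacts [absurd h.1 hvA, absurd h.2 hvB, h.2, absurd h.1 hne.symm]
  · intro hy
    exact ⟨by rintro rfl; tauto, by tauto⟩

theorem bipartiteWithApex_adj_of_ne_apex {x y : V} (h : (bipartiteWithApex A B X Y v).Adj x y)
    (hx : x ≠ v) (hy : y ≠ v) : (x ∈ A ∧ y ∈ B) ∨ (x ∈ B ∧ y ∈ A) := by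
  rw [bipartiteWithApex_adj] at h
  tauto

theorem bipartiteWithApex_apex_mem_of_triangle (hAB : Disjoint A B) {a b c : V}
    (hab : (bipartiteWithApex A B X Y v).Adj a b) (hac : (bipartiteWithApex A B X Y v).Adj a c)
    (hbc : (bipartiteWithApex A B X Y v).Adj b c) : a = v ∨ b = v ∨ c = v := by
  by_contra! h
  have hd : ∀ w, w ∈ A → w ∉ B := fun _ h => Finset.disjoint_left.mp hAB h
  rcases bipartiteWithApex_adj_of_ne_apex hab h.1 h.2.1 with ⟨ha, hb⟩ | ⟨ha, hb⟩ <;>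
  rcases bipartiteWithApex_adj_of_ne_apex hac h.1 h.2.2 with ⟨ha', hc⟩ | ⟨ha', hc⟩ <;>
  rcases bipartiteWithApex_adj_of_ne_apex hbc h.2.1 h.2.2 with ⟨hb', hc'⟩ | ⟨hb', hc'⟩ <;>
  first
  | exact hd a ‹_› ‹_› | exact hd b ‹_› ‹_› | exact hd c ‹_› ‹_›

theorem bipartiteWithApex_mem_of_triangle_of_apex (hAB : Disjoint A B) (hvA : v ∉ A)
    (hvB : v ∉ B) (hXA : X ⊆ A) (hYB : Y ⊆ B) {b c : V}
    (hb : (bipartiteWithApex A B X Y v).Adj v b) (hc : (bipartiteWithApex A B X Y v).Adj v c)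
    (hbc : (bipartiteWithApex A B X Y v).Adj b c) : (b ∈ X ∧ c ∈ Y) ∨ (b ∈ Y ∧ c ∈ X) := by
  have side : ∀ {w}, (bipartiteWithApex A B X Y v).Adj v w →
      (w ∈ A → w ∈ X) ∧ (w ∈ B → w ∈ Y) := by
    intro w hw
    rcases (bipartiteWithApex_apex_adj hvA hvB hXA hYB).mp hw with hw | hw
    · exact ⟨fun _ => hw, fun h => absurd h (Finset.disjoint_left.mp hAB (hXA hw))⟩
    · exact ⟨fun h => absurd (hYB hw) (Finset.disjoint_left.mp hAB h), fun _ => hw⟩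
  rcases bipartiteWithApex_adj_of_ne_apex hbc hb.ne' hc.ne' with ⟨hbA, hcB⟩ | ⟨hbB, hcA⟩
  · exact Or.inl ⟨(side hb).1 hbA, (side hc).2 hcB⟩
  · exact Or.inr ⟨(side hb).2 hbB, (side hc).1 hcA⟩

theorem card_cliqueFinset_three_bipartiteWithApex_le [Fintype V] [DecidableEq V]
    [DecidableRel (bipartiteWithApex A B X Y v).Adj] (hAB : Disjoint A B) (hvA : v ∉ A)
    (hvB : v ∉ B) (hXA : X ⊆ A) (hYB : Y ⊆ B) :
    #((bipartiteWithApex A B X Y v).cliqueFinset 3) ≤ #X * #Y := by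
  calc _ ≤ #((X ×ˢ Y).image fun p => ({v, p.1, p.2} : Finset V)) := card_le_card ?_
    _ ≤ #(X ×ˢ Y) := card_image_le
    _ = #X * #Y := card_product X Y
  intro t ht
  obtain ⟨a, b, c, hab, hac, hbc, rfl⟩ := is3Clique_iff.mp (mem_cliqueFinset_iff.mp ht)
  suffices h : ∀ {b c}, (bipartiteWithApex A B X Y v).Adj v b →
      (bipartiteWithApex A B X Y v).Adj v c → (bipartiteWithApex A B X Y v).Adj b c →
      ({v, b, c} : Finset V) ∈ (X ×ˢ Y).image fun p => ({v, p.1, p.2} : Finset V) by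
    rcases bipartiteWithApex_apex_mem_of_triangle hAB hab hac hbc with rfl | rfl | rfl
    · exact h hab hac hbc
    · rw [insert_comm]
      exact h hab.symm hbc hac
    · rw [pair_comm, insert_comm]
      exact h hac.symm hbc.symm hab
  intro b c hb hc hbc
  rw [mem_image]
  rcases bipartiteWithApex_mem_of_triangle_of_apex hAB hvA hvB hXA hYB hb hc hbc with
    ⟨hbX, hcY⟩ | ⟨hbY, hcX⟩
  · exact ⟨(b, c), mk_mem_product hbX hcY, rfl⟩
  · exact ⟨(c, b), mk_mem_product hcX hbY, by rw [pair_comm]⟩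

theorem bipartiteWithApex_inter_neighborFinset_subset [Fintype V] [DecidableEq V]
    [DecidableRel (bipartiteWithApex A B X Y v).Adj] (hAB : Disjoint A B) (hvA : v ∉ A)
    (hvB : v ∉ B) (hXA : X ⊆ A) (hYB : Y ⊆ B) {u w : V}
    (huw : (bipartiteWithApex A B X Y v).Adj u w) :
    (bipartiteWithApex A B X Y v).neighborFinset u ∩
        (bipartiteWithApex A B X Y v).neighborFinset w ⊆ X ∨
      (bipartiteWithApex A B X Y v).neighborFinset u ∩
        (bipartiteWithApex A B X Y v).neighborFinset w ⊆ Y ∨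
      (bipartiteWithApex A B X Y v).neighborFinset u ∩
        (bipartiteWithApex A B X Y v).neighborFinset w ⊆ {v} := by
  have hXY : ∀ x ∈ X, x ∉ Y := fun _ hx hy =>
    Finset.disjoint_left.mp hAB (hXA hx) (hYB hy)
  have apex : ∀ {w}, (bipartiteWithApex A B X Y v).Adj v w →
      (bipartiteWithApex A B X Y v).neighborFinset v ∩
          (bipartiteWithApex A B X Y v).neighborFinset w ⊆ X ∨
        (bipartiteWithApex A B X Y v).neighborFinset v ∩
          (bipartiteWithApex A B X Y v).neighborFinset w ⊆ Y := by
    intro w hw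
    rcases (bipartiteWithApex_apex_adj hvA hvB hXA hYB).mp hw with hwX | hwY
    · right
      intro z hz
      simp only [mem_inter, mem_neighborFinset] at hz
      rcases bipartiteWithApex_mem_of_triangle_of_apex hAB hvA hvB hXA hYB hw hz.1 hz.2 with
        h | h
      exacts [h.2, absurd h.1 (hXY w hwX)]
    · left
      intro z hz
      simp only [mem_inter, mem_neighborFinset] at hz
      rcases bipartiteWithApex_mem_of_triangle_of_apex hAB hvA hvB hXA hYB hw hz.1 hz.2 with
        h | h
      exacts [absurd hwY (hXY w h.1), h.2]
  by_cases hu : u = v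
  · subst hu
    exact (apex huw).imp_right Or.inl
  by_cases hw : w = v
  · subst hw
    rw [inter_comm]
    exact (apex huw.symm).imp_right Or.inl
  refine Or.inr (Or.inr fun z hz => ?_)
  simp only [mem_inter, mem_neighborFinset] at hz
  rcases bipartiteWithApex_apex_mem_of_triangle hAB huw hz.1 hz.2 with h | h | h
  exacts [absurd h hu, absurd h hw, mem_singleton.mpr h]

theorem card_mul_add_add_le_card_edgeFinset_bipartiteWithApex [Fintype V] [DecidableEq V]
    [DecidableRel (bipartiteWithApex A B X Y v).Adj] (hAB : Disjoint A B) (hvA : v ∉ A)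
    (hvB : v ∉ B) (hXA : X ⊆ A) (hYB : Y ⊆ B) :
    #A * #B + (#X + #Y) ≤ #(bipartiteWithApex A B X Y v).edgeFinset := by
  have hd : ∀ x ∈ A, x ∉ B := fun _ h => Finset.disjoint_left.mp hAB h
  calc #A * #B + (#X + #Y) = #((A ×ˢ B).disjSum (X ∪ Y)) := by
        rw [card_disjSum, card_product, card_union_of_disjoint (hAB.mono hXA hYB)]
    _ ≤ _ := card_le_card_of_injOn (Sum.elim (fun p => s(p.1, p.2)) (fun x => s(v, x))) ?_ ?_
  · rintro (⟨a, b⟩ | x) h <;>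
      simp only [mem_coe, inl_mem_disjSum, inr_mem_disjSum, mem_product, mem_union] at h <;>
      simp only [Sum.elim_inl, Sum.elim_inr, mem_coe, mem_edgeFinset, mem_edgeSet]
    · exact bipartiteWithApex_adj.mpr ⟨fun hab => hd b (hab ▸ h.1) h.2, Or.inl h⟩
    · exact (bipartiteWithApex_apex_adj hvA hvB hXA hYB).mpr h
  · rintro (⟨a, b⟩ | x) h (⟨a', b'⟩ | x') h' heq <;>
      simp only [mem_coe, inl_mem_disjSum, inr_mem_disjSum, mem_product, mem_union] at h h' <;>
      simp only [Sum.elim_inl, Sum.elim_inr, Sym2.eq_iff] at heq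
    · rcases heq with ⟨rfl, rfl⟩ | ⟨rfl, rfl⟩
      exacts [rfl, absurd h'.2 (hd _ h.1)]
    · rcases heq with ⟨rfl, -⟩ | ⟨-, rfl⟩
      exacts [absurd h.1 hvA, absurd h.2 hvB]
    · rcases heq with ⟨rfl, -⟩ | ⟨rfl, -⟩
      exacts [absurd h'.1 hvA, absurd h'.2 hvB]
    · rcases heq with ⟨-, rfl⟩ | ⟨rfl, rfl⟩ <;> rfl

end SimpleGraph

def finIco (n a b : ℕ) : Finset (Fin n) := {i | a ≤ (i : ℕ) ∧ (i : ℕ) < b}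

theorem card_finIco {n a b : ℕ} (h : b ≤ n) : #(finIco n a b) = b - a := by
  rw [← card_map Fin.valEmbedding, ← Nat.card_Ico a b]
  congr 1
  ext i
  simp only [finIco, mem_map, mem_filter, mem_univ, true_and, Fin.valEmbedding_apply, mem_Ico]
  exact ⟨by rintro ⟨j, hj, rfl⟩; exact hj, fun hi => ⟨⟨i, by omega⟩, hi, rfl⟩⟩

section thm1Example

variable {m k : ℕ}

theorem thm1Example_eq_bipartiteWithApex (hm : 0 < m) :
    thm1Example m k = SimpleGraph.bipartiteWithApex (finIco (2 * m) 1 m)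
      (finIco (2 * m) m (2 * m)) (finIco (2 * m) 1 k) (finIco (2 * m) m (2 * m - k + 2))
      ⟨0, by omega⟩ := by
  ext i j
  simp only [thm1Example, SimpleGraph.bipartiteWithApex, SimpleGraph.fromRel_adj, finIco,
    mem_filter, mem_univ, true_and, Fin.ext_iff]
  constructor <;> rintro ⟨hij, h⟩ <;> exact ⟨hij, by omega⟩

theorem thm1Example_apex_conditions (hm : 0 < m) (hkm : k ≤ m) :
    Disjoint (finIco (2 * m) 1 m) (finIco (2 * m) m (2 * m)) ∧
      (⟨0, by omega⟩ : Fin (2 * m)) ∉ finIco (2 * m) 1 m ∧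
      (⟨0, by omega⟩ : Fin (2 * m)) ∉ finIco (2 * m) m (2 * m) ∧
      finIco (2 * m) 1 k ⊆ finIco (2 * m) 1 m ∧
      finIco (2 * m) m (2 * m - k + 2) ⊆ finIco (2 * m) m (2 * m) := by
  simp only [Finset.disjoint_left, subset_iff, finIco, mem_filter, mem_univ, true_and]
  refine ⟨fun _ _ _ => by omega, by omega, by omega, fun _ _ => by omega, fun _ _ => by omega⟩

theorem thm1Example_card_cliqueFinset_three_le (hk : 2 ≤ k) (hkm : k ≤ m) :
    #((thm1Example m k).cliqueFinset 3) ≤ (k - 1) * (m + 2 - k) := by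
  have hm : 0 < m := by omega
  obtain ⟨hAB, hvA, hvB, hXA, hYB⟩ := thm1Example_apex_conditions hm hkm
  rw [thm1Example_eq_bipartiteWithApex hm]
  refine (SimpleGraph.card_cliqueFinset_three_bipartiteWithApex_le hAB hvA hvB hXA hYB).trans ?_
  rw [card_finIco (by omega), card_finIco (by omega)]
  exact Nat.mul_le_mul_left _ (by omega)

theorem thm1Example_card_inter_neighborFinset_le (hk : 2 ≤ k) (hkm : k ≤ m)
    {u w : Fin (2 * m)} (huw : (thm1Example m k).Adj u w) :
    #((thm1Example m k).neighborFinset u ∩ (thm1Example m k).neighborFinset w) ≤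
      max (k - 1) (m + 2 - k) := by
  have hm : 0 < m := by omega
  obtain ⟨hAB, hvA, hvB, hXA, hYB⟩ := thm1Example_apex_conditions hm hkm
  rw [thm1Example_eq_bipartiteWithApex hm] at huw ⊢
  rcases SimpleGraph.bipartiteWithApex_inter_neighborFinset_subset hAB hvA hvB hXA hYB huw
    with h | h | h <;> refine (card_le_card h).trans ?_
  · rw [card_finIco (by omega)]; omega
  · rw [card_finIco (by omega)]; omega
  · rw [card_singleton]; omega

theorem thm1Example_card_edgeFinset_ge (hk : 2 ≤ k) (hkm : k ≤ m) :
    m * m + 1 ≤ #(thm1Example m k).edgeFinset := by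
  have hm : 0 < m := by omega
  obtain ⟨hAB, hvA, hvB, hXA, hYB⟩ := thm1Example_apex_conditions hm hkm
  rw [thm1Example_eq_bipartiteWithApex hm]
  refine le_trans ?_
    (SimpleGraph.card_mul_add_add_le_card_edgeFinset_bipartiteWithApex hAB hvA hvB hXA hYB)
  rw [card_finIco (by omega), card_finIco le_rfl, card_finIco (by omega), card_finIco (by omega),
    show 2 * m - m = m by omega]
  have : (m - 1) * m + m = m * m := by
    rw [← Nat.succ_mul, Nat.succ_eq_add_one, Nat.sub_add_cancel hm]
  omega

end thm1Example

/-- Sharpness of Theorem 1: for `α ∈ (1/2, 1)` and `n = 2m` large, the modified complete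
bipartite graph (with `k = ⌊αn/2⌋`) has at least `⌊n²/4⌋ + 1` edges, every edge in fewer
than `αn/2` triangles, and at most `α(1-α)n²/4 + O(n)` triangles. -/
theorem thm1_example_properties (α : ℝ) (hα₁ : 1 / 2 < α) (hα₂ : α < 1) :
    ∃ C : ℝ, 0 < C ∧ ∃ n₀ : ℕ, ∀ m : ℕ, n₀ ≤ m →
      (2 * m) ^ 2 / 4 + 1 ≤ (thm1Example m ⌊α * m⌋₊).edgeFinset.card ∧
      (∀ u v : Fin (2 * m), (thm1Example m ⌊α * m⌋₊).Adj u v →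
        (((thm1Example m ⌊α * m⌋₊).neighborFinset u ∩
          (thm1Example m ⌊α * m⌋₊).neighborFinset v).card : ℝ) < α * (2 * m) / 2) ∧
      ((((thm1Example m ⌊α * m⌋₊).cliqueFinset 3).card : ℝ) ≤
        α * (1 - α) * (2 * m) ^ 2 / 4 + C * (2 * m)) := by
  obtain ⟨n₀, hn₀⟩ := exists_nat_gt (3 / (2 * α - 1))
  refine ⟨2, two_pos, n₀, fun m hm => ?_⟩
  have hlarge : 3 < (2 * α - 1) * m := by
    rw [div_lt_iff₀ (by linarith)] at hn₀
    nlinarith [(Nat.cast_le (α := ℝ)).mpr hm]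
  set k := ⌊α * m⌋₊
  have hk_le : (k : ℝ) ≤ α * m := Nat.floor_le (by positivity)
  have hk_gt : α * m < k + 1 := Nat.lt_floor_add_one _
  have hk : 2 ≤ k := by exact_mod_cast (show (1 : ℝ) < k by nlinarith)
  have hk_m : (k : ℝ) ≤ m := by nlinarith
  have hkm : k ≤ m := by exact_mod_cast hk_m
  refine ⟨?_, fun u w huw => ?_, ?_⟩
  · rw [show (2 * m) ^ 2 = 4 * (m * m) by ring, Nat.mul_div_cancel_left _ four_pos]
    exact thm1Example_card_edgeFinset_ge hk hkm
  · have h := Nat.cast_le (α := ℝ).mpr (thm1Example_card_inter_neighborFinset_le hk hkm huw)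
    rw [Nat.cast_max, Nat.cast_sub (by omega), Nat.cast_sub (by omega)] at h
    push_cast at h
    refine h.trans_lt (max_lt ?_ ?_) <;> linarith
  · have h := Nat.cast_le (α := ℝ).mpr (thm1Example_card_cliqueFinset_three_le hk hkm)
    rw [Nat.cast_mul, Nat.cast_sub (by omega), Nat.cast_sub (by omega)] at h
    push_cast at h
    calc _ ≤ ((k : ℝ) - 1) * (m + 2 - k) := h
      _ ≤ (α * m - 1) * (m + 2 - k) := by gcongr; linarith
      _ ≤ (α * m - 1) * (m + 3 - α * m) :=
        mul_le_mul_of_nonneg_left (by linarith) (by linarith)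
      _ ≤ _ := by nlinarith
end

section
/- Every graph on n vertices with at least ⌊n²/4⌋ + 1 edges contains at least ⌊n/2⌋ triangles. -/
/-!
Induct on the number of vertices. By Mantel's theorem the graph has a triangle `abc`. If some
edge `uv` of a triangle has `deg u + deg v ≤ n`, deleting `u` and `v` loses at most `n - 1`
edges, which is exactly the drop from `⌊n²/4⌋` to `⌊(n-2)²/4⌋`, and destroys at least one
triangle, so induction applies. Otherwise `2 (deg a + deg b + deg c) ≥ 3n + 3`. A vertex
outside `abc` with `g` neighbours in it spans `C(g, 2) ≥ g - 1` triangles with edges of `abc`,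
and these contributions add up to at least `deg a + deg b + deg c - n - 2 ≥ (n - 1) / 2`
triangles besides `abc`.
-/

open Finset Fintype

theorem Nat.le_choose_two_add_one (g : ℕ) : g ≤ g.choose 2 + 1 := by
  rcases g with _ | g
  · simp
  · rw [Nat.choose_succ_succ', Nat.choose_one_right]
    omega

namespace SimpleGraph

variable {V : Type*} [Fintype V] (G : SimpleGraph V) [DecidableRel G.Adj]

theorem card_edgeFinset_le_of_cliqueFree_three (h : G.CliqueFree 3) :
    #G.edgeFinset ≤ card V ^ 2 / 4 := by
  have := h.card_edgeFinset_le (r := 2)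
  have hmod : (card V % 2).choose 2 = 0 := Nat.choose_eq_zero_of_lt (by omega)
  simp only [hmod, add_zero, Nat.add_one_sub_one, mul_one] at this
  exact this.trans (Nat.div_le_div_right (Nat.sub_le _ _))

theorem sum_degree_eq_sum_card_filter_adj (T : Finset V) :
    ∑ v ∈ T, G.degree v = ∑ w, #{v ∈ T | G.Adj w v} := by
  simp_rw [← card_neighborFinset_eq_degree, neighborFinset_eq_filter, card_filter]
  rw [sum_comm]
  exact sum_congr rfl fun w _ => sum_congr rfl fun v _ => if_congr (G.adj_comm _ _) rfl rfl

variable [DecidableEq V]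

theorem card_edgeFinset_add_one_le {u v : V} (huv : G.Adj u v) :
    #G.edgeFinset + 1 ≤ #(G.induce ({u, v} : Set V)ᶜ).edgeFinset + G.degree u + G.degree v := by
  set s : Set V := ({u, v} : Set V)ᶜ
  have hinside : #(G.induce s).edgeFinset = #(G.edgeFinset ∩ s.toFinset.sym2) := by
    rw [← map_edgeFinset_induce, card_map]
  have houtside : G.edgeFinset \ s.toFinset.sym2 ⊆ G.incidenceFinset u ∪ G.incidenceFinset v := by
    intro e he
    simp only [mem_sdiff, mem_sym2_iff, not_forall, Set.mem_toFinset, s, Set.mem_compl_iff,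
      Set.mem_insert_iff, Set.mem_singleton_iff, not_not, exists_prop] at he
    obtain ⟨he, x, hx, rfl | rfl⟩ := he
    · exact mem_union_left _ ((mem_incidenceFinset _ _ _).2 ⟨mem_edgeFinset.1 he, hx⟩)
    · exact mem_union_right _ ((mem_incidenceFinset _ _ _).2 ⟨mem_edgeFinset.1 he, hx⟩)
  have hshared : s(u, v) ∈ G.incidenceFinset u ∩ G.incidenceFinset v := by
    simp only [mem_inter, mem_incidenceFinset]
    exact ⟨⟨huv, Sym2.mem_mk_left u v⟩, huv, Sym2.mem_mk_right u v⟩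
  have hunion := card_union_add_card_inter (G.incidenceFinset u) (G.incidenceFinset v)
  rw [card_incidenceFinset_eq_degree, card_incidenceFinset_eq_degree] at hunion
  have := card_pos.2 ⟨_, hshared⟩
  have := card_le_card houtside
  have := card_inter_add_card_sdiff G.edgeFinset s.toFinset.sym2
  rw [hinside]
  omega

theorem card_cliqueFinset_induce_lt {s : Set V} [DecidablePred (· ∈ s)] {k : ℕ} {T : Finset V}
    (hT : T ∈ G.cliqueFinset k) (hTs : ¬ ↑T ⊆ s) :
    #((G.induce s).cliqueFinset k) < #(G.cliqueFinset k) := by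
  refine (card_map (mapEmbedding (.subtype (· ∈ s))).toEmbedding).symm.trans_lt
    (card_lt_card ⟨fun t' ht' => ?_, fun hsub => hTs ?_⟩)
  · obtain ⟨t, ht, rfl⟩ := mem_map.1 ht'
    rw [mem_cliqueFinset_iff] at ht ⊢
    exact (isNClique_induce_iff s t k).1 ht
  · obtain ⟨t, -, ht⟩ := mem_map.1 (hsub hT)
    simp [← ht]

/-- Each pair `(w, q)` with `w ∉ T` and `q` a `k`-subset of the neighbours of `w` in `T` gives
the clique `insert w q`, distinct from `T` and from the cliques of all other pairs. -/
theorem add_sum_choose_le_card_cliqueFinset {k : ℕ} {T : Finset V}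
    (hT : T ∈ G.cliqueFinset (k + 1)) :
    1 + ∑ w ∈ Tᶜ, (#{v ∈ T | G.Adj w v}).choose k ≤ #(G.cliqueFinset (k + 1)) := by
  have hTclique := (mem_cliqueFinset_iff.1 hT).isClique
  set D := Tᶜ.sigma fun w => powersetCard k {v ∈ T | G.Adj w v}
  have hD : #D = ∑ w ∈ Tᶜ, (#{v ∈ T | G.Adj w v}).choose k := by
    simp only [D, card_sigma, card_powersetCard]
  have hmaps : ∀ p ∈ D, insert p.1 p.2 ∈ (G.cliqueFinset (k + 1)).erase T := by
    rintro ⟨w, q⟩ hp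
    simp only [D, mem_sigma, mem_compl, mem_powersetCard, subset_iff, mem_filter] at hp
    obtain ⟨hwT, hq, hqk⟩ := hp
    refine mem_erase.2 ⟨fun h => hwT (h ▸ mem_insert_self w q), mem_cliqueFinset_iff.2 ?_⟩
    exact IsNClique.insert ⟨hTclique.subset fun v hv => (hq hv).1, hqk⟩ fun v hv => (hq hv).2
  have hinj : Set.InjOn (fun p : (_ : V) × Finset V => insert p.1 p.2) D := by
    rintro ⟨w, q⟩ hp ⟨w', q'⟩ hp' h
    simp only [D, coe_sigma, Set.mem_sigma_iff, coe_compl, Set.mem_compl_iff, mem_coe,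
      mem_powersetCard] at hp hp' h
    have hqT : q ⊆ T := hp.2.1.trans (filter_subset _ _)
    have hq'T : q' ⊆ T := hp'.2.1.trans (filter_subset _ _)
    have hq : q = q' := by
      rw [← inter_eq_left.2 hqT, ← insert_inter_of_notMem hp.1, h, insert_inter_of_notMem hp'.1,
        inter_eq_left.2 hq'T]
    have hw : w = w' := by
      rcases mem_insert.1 (h ▸ mem_insert_self w q) with hw | hw
      · exact hw
      · exact absurd (hq'T hw) hp.1
    subst hq hw
    rfl
  have := card_le_card_of_injOn _ hmaps hinj
  rw [card_erase_of_mem hT, hD] at this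
  have := card_pos.2 ⟨T, hT⟩
  omega

theorem sum_degree_le_card_cliqueFinset_three {T : Finset V} (hT : T ∈ G.cliqueFinset 3) :
    ∑ v ∈ T, G.degree v ≤ #(G.cliqueFinset 3) + card V + 2 := by
  have hT' := mem_cliqueFinset_iff.1 hT
  have hinside : ∀ w ∈ T, #{v ∈ T | G.Adj w v} = 2 := by
    intro w hw
    have : ({v ∈ T | G.Adj w v} : Finset V) = T.erase w := by
      ext v
      simp only [mem_filter, mem_erase]
      exact ⟨fun h => ⟨h.2.ne', h.1⟩, fun h => ⟨h.2, hT'.isClique hw h.2 h.1.symm⟩⟩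
    rw [this, card_erase_of_mem hw, hT'.card_eq]
  have hpairs : 1 + ∑ w ∈ Tᶜ, (#{v ∈ T | G.Adj w v}).choose 2 ≤ #(G.cliqueFinset 3) :=
    G.add_sum_choose_le_card_cliqueFinset hT
  have hcompl : #Tᶜ = card V - 3 := by rw [card_compl, hT'.card_eq]
  have hn : 3 ≤ card V := hT'.card_eq ▸ card_le_univ T
  calc ∑ v ∈ T, G.degree v
      = ∑ w ∈ T, #{v ∈ T | G.Adj w v} + ∑ w ∈ Tᶜ, #{v ∈ T | G.Adj w v} := by
        rw [sum_degree_eq_sum_card_filter_adj, sum_add_sum_compl]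
    _ ≤ 6 + ∑ w ∈ Tᶜ, ((#{v ∈ T | G.Adj w v}).choose 2 + 1) := by
        rw [sum_congr rfl hinside, sum_const, hT'.card_eq]
        exact add_le_add le_rfl (sum_le_sum fun w _ => Nat.le_choose_two_add_one _)
    _ ≤ #(G.cliqueFinset 3) + card V + 2 := by
        rw [sum_add_distrib, sum_const, hcompl, smul_eq_mul, mul_one]
        omega

theorem card_div_two_le_card_cliqueFinset_three (h : card V ^ 2 / 4 + 1 ≤ #G.edgeFinset) :
    card V / 2 ≤ #(G.cliqueFinset 3) := by
  induction hn : card V using Nat.strong_induction_on generalizing V with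
  | _ n ih =>
  obtain ⟨T, hT⟩ : ∃ T, G.IsNClique 3 T := by
    by_contra! hfree
    have := G.card_edgeFinset_le_of_cliqueFree_three hfree
    omega
  obtain ⟨a, b, c, hab, hac, hbc, rfl⟩ := is3Clique_iff.1 hT
  have delete_ends : ∀ u v w, G.Adj u v → G.Adj u w → G.Adj v w →
      G.degree u + G.degree v ≤ n → n / 2 ≤ #(G.cliqueFinset 3) := by
    intro u v w huv huw hvw hdeg
    have huvw : {u, v, w} ∈ G.cliqueFinset 3 :=
      mem_cliqueFinset_iff.2 (is3Clique_triple_iff.2 ⟨huv, huw, hvw⟩)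
    have htri := G.card_cliqueFinset_induce_lt huvw (s := ({u, v} : Set V)ᶜ)
      fun hsub => hsub (mem_coe.2 (mem_insert_self u _)) (Set.mem_insert u _)
    have hedges := G.card_edgeFinset_add_one_le huv
    obtain ⟨m, rfl⟩ : ∃ m, n = m + 2 :=
      ⟨n - 2, by have := card_pair huv.ne ▸ card_le_univ {u, v}; omega⟩
    have hcard : card ↥(({u, v} : Set V)ᶜ) = m := by
      rw [Fintype.card_compl_set, hn]
      simp [huv.ne]
    have hsq : (m + 2) ^ 2 / 4 = m ^ 2 / 4 + (m + 1) := by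
      rw [show (m + 2) ^ 2 = m ^ 2 + (m + 1) * 4 by ring, Nat.add_mul_div_right _ _ four_pos]
    rw [hn, hsq] at h
    have := ih m (by omega) (G.induce ({u, v} : Set V)ᶜ) (by rw [hcard]; omega) hcard
    omega
  rcases le_or_gt (G.degree a + G.degree b) n with hab' | hab'
  · exact delete_ends a b c hab hac hbc hab'
  rcases le_or_gt (G.degree a + G.degree c) n with hac' | hac'
  · exact delete_ends a c b hac hab hbc.symm hac'
  rcases le_or_gt (G.degree b + G.degree c) n with hbc' | hbc'
  · exact delete_ends b c a hbc hab.symm hac.symm hbc'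
  have := G.sum_degree_le_card_cliqueFinset_three (mem_cliqueFinset_iff.2 hT)
  rw [sum_insert (by simp [hab.ne, hac.ne]), sum_pair hbc.ne, hn] at this
  omega

end SimpleGraph

/-- Rademacher's theorem: every graph on `n` vertices with at least `⌊n²/4⌋ + 1` edges
contains at least `⌊n/2⌋` triangles. -/
theorem rademacher (n : ℕ) (G : SimpleGraph (Fin n)) [DecidableRel G.Adj]
    (h : n ^ 2 / 4 + 1 ≤ G.edgeFinset.card) :
    n / 2 ≤ (G.cliqueFinset 3).card := by
  simpa using G.card_div_two_le_card_cliqueFinset_three (by simpa using h)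
end

section
/- Let G be a graph on n vertices with a vertex partition X ∪ Y maximizing the number of edges between X and Y, and suppose the number of X,Y-edges is at least n²/4 − δn². Then (1 − 3√δ)·n/2 ≤ |X| ≤ (1 + 3√δ)·n/2, provided e(G) > n²/4. -/
attribute [local instance] Classical.propDecidable

/-- The number of edges of `G` with one endpoint in `X` and the other in `Y`
(counted as ordered pairs from `X × Y`; for disjoint `X, Y` each such edge is
counted exactly once). -/
noncomputable def crossEdges {n : ℕ} (G : SimpleGraph (Fin n)) (X Y : Finset (Fin n)) : ℕ :=
  ((X ×ˢ Y).filter (fun p => G.Adj p.1 p.2)).card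

/-- If the partition `X ∪ Xᶜ` maximizes the number of crossing edges, that number is at
least `n²/4 - δn²` with `0 < δ < 1/9`, and `e(G) > n²/4`, then both parts have size
`(1 ± 3√δ)n/2`. -/
theorem max_cut_parts_balanced {n : ℕ} (G : SimpleGraph (Fin n)) (X : Finset (Fin n))
    (δ : ℝ) (hδ₀ : 0 < δ) (hδ₁ : δ < 1 / 9)
    (hmax : ∀ X' : Finset (Fin n), crossEdges G X' X'ᶜ ≤ crossEdges G X Xᶜ)
    (hcross : (n : ℝ) ^ 2 / 4 - δ * n ^ 2 ≤ (crossEdges G X Xᶜ : ℝ))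
    (he : (n : ℝ) ^ 2 / 4 < (G.edgeFinset.card : ℝ)) :
    (1 - 3 * Real.sqrt δ) * n / 2 ≤ (X.card : ℝ) ∧
      (X.card : ℝ) ≤ (1 + 3 * Real.sqrt δ) * n / 2 := by
  have hcard : crossEdges G X Xᶜ ≤ X.card * Xᶜ.card := by
    calc crossEdges G X Xᶜ ≤ (X ×ˢ Xᶜ).card := Finset.card_filter_le _ _
      _ = X.card * Xᶜ.card := Finset.card_product _ _
  have hcompl : (Xᶜ.card : ℝ) = n - X.card := by
    have := Finset.card_compl X
    have hle : X.card ≤ n := by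
      simpa using Finset.card_le_card (Finset.subset_univ X)
    rw [this]
    push_cast [Fintype.card_fin, Nat.cast_sub hle]
    ring
  have h1 : (n : ℝ) ^ 2 / 4 - δ * n ^ 2 ≤ (X.card : ℝ) * (n - X.card) := by
    calc (n : ℝ) ^ 2 / 4 - δ * n ^ 2 ≤ (crossEdges G X Xᶜ : ℝ) := hcross
      _ ≤ (X.card : ℝ) * Xᶜ.card := by exact_mod_cast Nat.cast_le.mpr hcard
      _ = (X.card : ℝ) * (n - X.card) := by rw [hcompl]
  set x : ℝ := (X.card : ℝ)
  have hs : Real.sqrt δ ^ 2 = δ := Real.sq_sqrt hδ₀.le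
  have hs0 : 0 ≤ Real.sqrt δ := Real.sqrt_nonneg δ
  have hn0 : (0 : ℝ) ≤ n := Nat.cast_nonneg n
  constructor
  · nlinarith [sq_nonneg (x - (n : ℝ) / 2 + Real.sqrt δ * n), mul_nonneg hs0 hn0]
  · nlinarith [sq_nonneg (x - (n : ℝ) / 2 - Real.sqrt δ * n), mul_nonneg hs0 hn0]
end
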